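/- arXiv:2509.13169 — 3 statements merged into one kernel-verified Lean document; each statement's English description precedes it below -/
import Mathlib

section
/- Under conditional unconfoundedness Z ⊥ (Y(1),Y(0)) | (X,U), the overlap-weighted average treatment effect with weight h(X,U) = e⋆(X,U)(1−e⋆(X,U)) satisfies the identity τ_o = E[Z(1−e⋆(X,U))Y] / E[Z(1−e⋆(X,U))] − E[(1−Z)e⋆(X,U)Y] / E[(1−Z)e⋆(X,U)], where Y = ZY(1)+(1−Z)Y(0), provided E[e⋆(X,U)(1−e⋆(X,U))] > 0. -/
open MeasureTheory ProbabilityTheory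

/-- Under unconfoundedness given `(X, U)`, the overlap-weighted average treatment
effect `τ_o` (with weight `e⋆(X,U)(1−e⋆(X,U))`) equals
`E[Z(1−e⋆)Y]/E[Z(1−e⋆)] − E[(1−Z)e⋆Y]/E[(1−Z)e⋆]`,
provided `E[e⋆(1−e⋆)] > 0`. -/
theorem stmt2
    {Ω 𝓧 𝓤 : Type*} [MeasurableSpace Ω] [StandardBorelSpace Ω] [Nonempty Ω]
    [MeasurableSpace 𝓧] [MeasurableSpace 𝓤]
    (μ : Measure Ω) [IsProbabilityMeasure μ]
    (Z Y1 Y0 : Ω → ℝ) (X : Ω → 𝓧) (U : Ω → 𝓤)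
    (estar : 𝓧 × 𝓤 → ℝ)
    (hZmeas : Measurable Z) (hY1meas : Measurable Y1) (hY0meas : Measurable Y0)
    (hXU : Measurable (fun ω => (X ω, U ω)))
    (hemeas : Measurable estar)
    (hZbin : ∀ ω, Z ω = 0 ∨ Z ω = 1)
    (hY1L2 : MemLp Y1 2 μ) (hY0L2 : MemLp Y0 2 μ)
    -- `estar (X, U)` is the true propensity score `P(Z = 1 ∣ X, U)`
    (hps : (fun ω => estar (X ω, U ω))
      =ᵐ[μ] MeasureTheory.condExp
        (MeasurableSpace.comap (fun ω => (X ω, U ω)) inferInstance) μ Z)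
    -- unconfoundedness: `Z ⫫ (Y(1), Y(0)) ∣ (X, U)`
    (hCI : CondIndepFun (MeasurableSpace.comap (fun ω => (X ω, U ω)) inferInstance)
      hXU.comap_le Z (fun ω => (Y1 ω, Y0 ω)) μ)
    -- overlap-weight normalization is positive
    (hpos : 0 < ∫ ω, estar (X ω, U ω) * (1 - estar (X ω, U ω)) ∂μ)
    -- the observed outcome
    (Y : Ω → ℝ) (hY : ∀ ω, Y ω = Z ω * Y1 ω + (1 - Z ω) * Y0 ω) :
    -- τ_o = E[e⋆(1−e⋆)·E[Y(1)−Y(0)|X,U]] / E[e⋆(1−e⋆)]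
    (∫ ω, estar (X ω, U ω) * (1 - estar (X ω, U ω)) *
        (MeasureTheory.condExp (MeasurableSpace.comap (fun ω => (X ω, U ω)) inferInstance) μ
          (fun ω' => Y1 ω' - Y0 ω')) ω ∂μ)
      / (∫ ω, estar (X ω, U ω) * (1 - estar (X ω, U ω)) ∂μ)
    = (∫ ω, Z ω * (1 - estar (X ω, U ω)) * Y ω ∂μ)
        / (∫ ω, Z ω * (1 - estar (X ω, U ω)) ∂μ)
      - (∫ ω, (1 - Z ω) * estar (X ω, U ω) * Y ω ∂μ)
        / (∫ ω, (1 - Z ω) * estar (X ω, U ω) ∂μ) := by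
  classical
  have hm := hXU.comap_le
  set W : Ω → ℝ × ℝ := fun ω => (Y1 ω, Y0 ω) with hWdef
  have hWmeas : Measurable W := hY1meas.prodMk hY0meas
  have hmW := hWmeas.comap_le
  haveI hsf : SigmaFinite (μ.trim hm) := by infer_instance
  set eb : Ω → ℝ := μ[Z|(MeasurableSpace.comap (fun ω => (X ω, U ω)) inferInstance)] with hebdef
  -- basic facts about Z
  have hZ0 : ∀ ω, 0 ≤ Z ω := fun ω => by rcases hZbin ω with h | h <;> rw [h] <;> norm_num
  have hZ1 : ∀ ω, Z ω ≤ 1 := fun ω => by rcases hZbin ω with h | h <;> rw [h] <;> norm_num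
  have hZnorm : ∀ ω, ‖Z ω‖ ≤ 1 := fun ω => by
    rw [Real.norm_eq_abs, abs_le]; exact ⟨by linarith [hZ0 ω], hZ1 ω⟩
  have hZint : Integrable Z μ :=
    Integrable.mono' (integrable_const 1) hZmeas.aestronglyMeasurable (Filter.Eventually.of_forall hZnorm)
  -- basic facts about eb
  have heb_sm : StronglyMeasurable[(MeasurableSpace.comap (fun ω => (X ω, U ω)) inferInstance)] eb := stronglyMeasurable_condExp
  have heb_meas : AEStronglyMeasurable eb μ := (heb_sm.mono hm).aestronglyMeasurable
  have heb_int : Integrable eb μ := integrable_condExp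
  have heb0 : ∀ᵐ ω ∂μ, 0 ≤ eb ω := by
    filter_upwards [condExp_nonneg (μ := μ) (m := (MeasurableSpace.comap (fun ω => (X ω, U ω)) inferInstance)) (Filter.Eventually.of_forall hZ0)] with ω h
    simpa using h
  have heb1 : ∀ᵐ ω ∂μ, eb ω ≤ 1 := by
    have h := condExp_mono (μ := μ) (m := (MeasurableSpace.comap (fun ω => (X ω, U ω)) inferInstance)) hZint (integrable_const (1 : ℝ))
      (Filter.Eventually.of_forall hZ1)
    rw [condExp_const hm] at h
    filter_upwards [h] with ω hω using hω
  have hebnorm : ∀ᵐ ω ∂μ, ‖eb ω‖ ≤ 1 := by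
    filter_upwards [heb0, heb1] with ω h0 h1
    rw [Real.norm_eq_abs, abs_le]; exact ⟨by linarith, h1⟩
  -- integrability of Y1, Y0
  have hY1int : Integrable Y1 μ := hY1L2.integrable one_le_two
  have hY0int : Integrable Y0 μ := hY0L2.integrable one_le_two
  -- measurability of Y1, Y0 w.r.t. mW
  have hWmW : Measurable[(MeasurableSpace.comap W inferInstance)] W := Measurable.of_comap_le le_rfl
  have hY1mW : StronglyMeasurable[(MeasurableSpace.comap W inferInstance)] Y1 := (measurable_fst.comp hWmW).stronglyMeasurable
  have hY0mW : StronglyMeasurable[(MeasurableSpace.comap W inferInstance)] Y0 := (measurable_snd.comp hWmW).stronglyMeasurable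
  -- pull-out property
  have Hpull : ∀ (f h : Ω → ℝ), AEStronglyMeasurable[(MeasurableSpace.comap (fun ω => (X ω, U ω)) inferInstance)] f μ → (∀ᵐ ω ∂μ, ‖f ω‖ ≤ 1) →
      Integrable h μ → ∫ ω, f ω * h ω ∂μ = ∫ ω, f ω * (μ[h|(MeasurableSpace.comap (fun ω => (X ω, U ω)) inferInstance)]) ω ∂μ := by
    intro f h hf hfb hh
    have h1 : μ[f * h|(MeasurableSpace.comap (fun ω => (X ω, U ω)) inferInstance)] =ᵐ[μ] f * μ[h|(MeasurableSpace.comap (fun ω => (X ω, U ω)) inferInstance)] :=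
      condExp_stronglyMeasurable_mul_of_bound₀ hm hf hh 1 hfb
    calc ∫ ω, f ω * h ω ∂μ = ∫ ω, (f * h) ω ∂μ := rfl
      _ = ∫ ω, (μ[f * h|(MeasurableSpace.comap (fun ω => (X ω, U ω)) inferInstance)]) ω ∂μ := (integral_condExp hm).symm
      _ = ∫ ω, (f * μ[h|(MeasurableSpace.comap (fun ω => (X ω, U ω)) inferInstance)]) ω ∂μ := integral_congr_ae h1
      _ = ∫ ω, f ω * (μ[h|(MeasurableSpace.comap (fun ω => (X ω, U ω)) inferInstance)]) ω ∂μ := rfl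
  -- the core lemma: E[g·(Z - eb)·V] = 0 for m-measurable bounded g and mW-integrable V
  have core : ∀ (g : Ω → ℝ), StronglyMeasurable[(MeasurableSpace.comap (fun ω => (X ω, U ω)) inferInstance)] g → (∀ᵐ ω ∂μ, ‖g ω‖ ≤ 1) →
      ∀ (V : Ω → ℝ), Integrable V (μ.trim hmW) →
      ∫ ω, g ω * (Z ω - eb ω) * V ω ∂μ = 0 := by
    intro g hg hgb
    have hgm : AEStronglyMeasurable g μ := (hg.mono hm).aestronglyMeasurable
    have hcmeas : AEStronglyMeasurable (fun ω => g ω * (Z ω - eb ω)) μ :=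
      hgm.mul (hZmeas.aestronglyMeasurable.sub heb_meas)
    have hcb : ∀ᵐ ω ∂μ, ‖g ω * (Z ω - eb ω)‖ ≤ 1 := by
      filter_upwards [hgb, heb0, heb1] with ω h1 h2 h3
      rw [norm_mul]
      have hz : ‖Z ω - eb ω‖ ≤ 1 := by
        rw [Real.norm_eq_abs, abs_le]
        exact ⟨by linarith [hZ0 ω], by linarith [hZ1 ω]⟩
      calc ‖g ω‖ * ‖Z ω - eb ω‖ ≤ 1 * 1 :=
            mul_le_mul h1 hz (norm_nonneg _) zero_le_one
        _ = 1 := by norm_num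
    intro V hV
    refine @Integrable.induction Ω ℝ (MeasurableSpace.comap W inferInstance) _ (μ.trim hmW)
      (fun V => ∫ ω, g ω * (Z ω - eb ω) * V ω ∂μ = 0) ?_ ?_ ?_ ?_ V hV
    · -- indicator case
      intro c s hs hμs
      have hsamb : MeasurableSet s := hmW s hs
      have h1s_int : Integrable (s.indicator fun _ => (1:ℝ)) μ :=
        (integrable_const (1:ℝ)).indicator hsamb
      have hA : MeasurableSet[MeasurableSpace.comap Z inferInstance] (Z ⁻¹' {1}) :=
        ⟨{1}, measurableSet_singleton 1, rfl⟩
      have hCI' := (condIndepFun_iff _ _ Z W hZmeas hWmeas μ).mp hCI (Z ⁻¹' {1}) s hA hs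
      have hZind : Z = (Z ⁻¹' {1}).indicator (fun _ => (1 : ℝ)) := by
        funext ω
        rcases hZbin ω with h | h <;>
          norm_num [Set.indicator_apply, Set.mem_preimage, h]
      have hprod : (fun ω => Z ω * s.indicator (fun _ => (1:ℝ)) ω)
          = ((Z ⁻¹' {1}) ∩ s).indicator (fun _ => (1 : ℝ)) := by
        funext ω
        rcases hZbin ω with h | h <;> by_cases hω : ω ∈ s <;>
          norm_num [Set.indicator_apply, Set.mem_preimage, Set.mem_inter_iff, h, hω]
      have hkey : μ[fun ω => Z ω * s.indicator (fun _ => (1:ℝ)) ω|(MeasurableSpace.comap (fun ω => (X ω, U ω)) inferInstance)]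
          =ᵐ[μ] fun ω => eb ω * (μ[s.indicator (fun _ => (1:ℝ))|(MeasurableSpace.comap (fun ω => (X ω, U ω)) inferInstance)]) ω := by
        rw [hprod]
        refine hCI'.trans ?_
        have hAe : eb = μ[(Z ⁻¹' {1}).indicator (fun _ => (1:ℝ))|(MeasurableSpace.comap (fun ω => (X ω, U ω)) inferInstance)] := by
          rw [hebdef]
          exact congrArg (fun f => μ[f|(MeasurableSpace.comap (fun ω => (X ω, U ω)) inferInstance)]) hZind
        rw [← hAe]
        exact Filter.Eventually.of_forall fun ω => rfl
      have hZ1s_int : Integrable (fun ω => Z ω * s.indicator (fun _ => (1:ℝ)) ω) μ :=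
        h1s_int.bdd_mul hZmeas.aestronglyMeasurable (Filter.Eventually.of_forall hZnorm)
      have heb1s_int : Integrable (fun ω => eb ω * s.indicator (fun _ => (1:ℝ)) ω) μ :=
        h1s_int.bdd_mul heb_meas hebnorm
      have step0 : ∫ ω, g ω * (Z ω - eb ω) * s.indicator (fun _ => c) ω ∂μ
          = c * ∫ ω, (g ω * (Z ω * s.indicator (fun _ => (1:ℝ)) ω)
              - g ω * (eb ω * s.indicator (fun _ => (1:ℝ)) ω)) ∂μ := by
        rw [← integral_const_mul]
        refine integral_congr_ae (Filter.Eventually.of_forall fun ω => ?_)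
        by_cases hω : ω ∈ s <;> simp [Set.indicator_apply, hω] <;> ring
      have int1 : Integrable (fun ω => g ω * (Z ω * s.indicator (fun _ => (1:ℝ)) ω)) μ :=
        hZ1s_int.bdd_mul hgm hgb
      have int2 : Integrable (fun ω => g ω * (eb ω * s.indicator (fun _ => (1:ℝ)) ω)) μ :=
        heb1s_int.bdd_mul hgm hgb
      have hL : ∫ ω, g ω * (Z ω * s.indicator (fun _ => (1:ℝ)) ω) ∂μ
          = ∫ ω, g ω * (eb ω * (μ[s.indicator (fun _ => (1:ℝ))|(MeasurableSpace.comap (fun ω => (X ω, U ω)) inferInstance)]) ω) ∂μ := by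
        rw [Hpull g (fun ω => Z ω * s.indicator (fun _ => (1:ℝ)) ω)
          hg.aestronglyMeasurable hgb hZ1s_int]
        refine integral_congr_ae ?_
        filter_upwards [hkey] with ω hω
        rw [hω]
      have hgeb : AEStronglyMeasurable[(MeasurableSpace.comap (fun ω => (X ω, U ω)) inferInstance)] (fun ω => g ω * eb ω) μ :=
        (hg.mul heb_sm).aestronglyMeasurable
      have hgebb : ∀ᵐ ω ∂μ, ‖g ω * eb ω‖ ≤ 1 := by
        filter_upwards [hgb, hebnorm] with ω h1 h2
        rw [norm_mul]
        calc ‖g ω‖ * ‖eb ω‖ ≤ 1 * 1 := mul_le_mul h1 h2 (norm_nonneg _) zero_le_one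
          _ = 1 := by norm_num
      have hR : ∫ ω, g ω * (eb ω * s.indicator (fun _ => (1:ℝ)) ω) ∂μ
          = ∫ ω, g ω * (eb ω * (μ[s.indicator (fun _ => (1:ℝ))|(MeasurableSpace.comap (fun ω => (X ω, U ω)) inferInstance)]) ω) ∂μ := by
        calc ∫ ω, g ω * (eb ω * s.indicator (fun _ => (1:ℝ)) ω) ∂μ
            = ∫ ω, (g ω * eb ω) * s.indicator (fun _ => (1:ℝ)) ω ∂μ :=
              integral_congr_ae (Filter.Eventually.of_forall fun ω => by ring)
          _ = ∫ ω, (g ω * eb ω) * (μ[s.indicator (fun _ => (1:ℝ))|(MeasurableSpace.comap (fun ω => (X ω, U ω)) inferInstance)]) ω ∂μ :=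
              Hpull (fun ω => g ω * eb ω) (s.indicator (fun _ => (1:ℝ))) hgeb hgebb h1s_int
          _ = ∫ ω, g ω * (eb ω * (μ[s.indicator (fun _ => (1:ℝ))|(MeasurableSpace.comap (fun ω => (X ω, U ω)) inferInstance)]) ω) ∂μ :=
              integral_congr_ae (Filter.Eventually.of_forall fun ω => by ring)
      rw [step0, integral_sub int1 int2, hL, hR, sub_self, mul_zero]

    · -- additivity
      intro V₁ V₂ _ h₁ h₂ ih₁ ih₂
      have e₁ : Integrable (fun ω => g ω * (Z ω - eb ω) * V₁ ω) μ :=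
        ((integrable_of_integrable_trim hmW h₁).bdd_mul hcmeas hcb)
      have e₂ : Integrable (fun ω => g ω * (Z ω - eb ω) * V₂ ω) μ :=
        ((integrable_of_integrable_trim hmW h₂).bdd_mul hcmeas hcb)
      have heq : ∫ ω, g ω * (Z ω - eb ω) * (V₁ + V₂) ω ∂μ
          = ∫ ω, (g ω * (Z ω - eb ω) * V₁ ω + g ω * (Z ω - eb ω) * V₂ ω) ∂μ := by
        refine integral_congr_ae (Filter.Eventually.of_forall fun ω => ?_)
        simp only [Pi.add_apply]; ring
      rw [heq, integral_add e₁ e₂, ih₁, ih₂, add_zero]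
    · -- closedness

      have lip : LipschitzWith 1
          (fun f : Lp ℝ 1 (μ.trim hmW) => ∫ ω, g ω * (Z ω - eb ω) * f ω ∂μ) := by
        refine LipschitzWith.of_dist_le_mul fun f f' => ?_
        have hfμ : Integrable (f : Ω → ℝ) μ :=
          integrable_of_integrable_trim hmW (L1.integrable_coeFn f)
        have hf'μ : Integrable (f' : Ω → ℝ) μ :=
          integrable_of_integrable_trim hmW (L1.integrable_coeFn f')
        have h1 : ∫ ω, g ω * (Z ω - eb ω) * f ω ∂μ - ∫ ω, g ω * (Z ω - eb ω) * f' ω ∂μ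
            = ∫ ω, g ω * (Z ω - eb ω) * ((f : Ω → ℝ) ω - f' ω) ∂μ := by
          rw [← integral_sub (hfμ.bdd_mul hcmeas hcb) (hf'μ.bdd_mul hcmeas hcb)]
          refine integral_congr_ae (Filter.Eventually.of_forall fun ω => ?_); ring
        have h2 : ‖∫ ω, g ω * (Z ω - eb ω) * ((f : Ω → ℝ) ω - f' ω) ∂μ‖
            ≤ ∫ ω, ‖(f : Ω → ℝ) ω - f' ω‖ ∂μ := by
          refine (norm_integral_le_integral_norm _).trans ?_
          refine integral_mono_ae ((hfμ.sub hf'μ).bdd_mul hcmeas hcb).norm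
            (hfμ.sub hf'μ).norm ?_
          filter_upwards [hcb] with ω hω
          rw [norm_mul]
          calc ‖g ω * (Z ω - eb ω)‖ * ‖(f : Ω → ℝ) ω - f' ω‖
              ≤ 1 * ‖(f : Ω → ℝ) ω - f' ω‖ :=
                mul_le_mul_of_nonneg_right hω (norm_nonneg _)
            _ = ‖(f : Ω → ℝ) ω - f' ω‖ := one_mul _
        have h3 : ∫ ω, ‖(f : Ω → ℝ) ω - f' ω‖ ∂μ = ‖f - f'‖ := by
          rw [L1.norm_eq_integral_norm, ← integral_trim_ae hmW
            (Lp.aestronglyMeasurable (f - f')).norm]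
          refine integral_congr_ae ?_
          filter_upwards [ae_of_ae_trim hmW (Lp.coeFn_sub f f')] with ω hω
          rw [hω]; rfl
        rw [Real.dist_eq, ← Real.norm_eq_abs, h1, dist_eq_norm, NNReal.coe_one, one_mul]
        exact h2.trans (le_of_eq h3)
      exact IsClosed.preimage lip.continuous isClosed_singleton

    · -- a.e. invariance
      intro V₁ V₂ hV12 _ ih
      have heq : ∫ ω, g ω * (Z ω - eb ω) * V₂ ω ∂μ = ∫ ω, g ω * (Z ω - eb ω) * V₁ ω ∂μ := by
        refine integral_congr_ae ?_
        filter_upwards [ae_of_ae_trim hmW hV12] with ω hω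
        rw [hω]
      rw [heq]; exact ih
  -- derived identity: E[g·Z·V] = E[g·eb·E[V|m]]
  have GEN : ∀ (g : Ω → ℝ), StronglyMeasurable[(MeasurableSpace.comap (fun ω => (X ω, U ω)) inferInstance)] g → (∀ᵐ ω ∂μ, ‖g ω‖ ≤ 1) →
      ∀ (V : Ω → ℝ), StronglyMeasurable[(MeasurableSpace.comap W inferInstance)] V → Integrable V μ →
      ∫ ω, g ω * Z ω * V ω ∂μ = ∫ ω, g ω * eb ω * (μ[V|(MeasurableSpace.comap (fun ω => (X ω, U ω)) inferInstance)]) ω ∂μ := by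
    intro g hg hgb V hVmW hVint
    have hgm : AEStronglyMeasurable g μ := (hg.mono hm).aestronglyMeasurable
    have hgeb : AEStronglyMeasurable[(MeasurableSpace.comap (fun ω => (X ω, U ω)) inferInstance)] (fun ω => g ω * eb ω) μ :=
      ((hg.mul heb_sm).aestronglyMeasurable)
    have hgebb : ∀ᵐ ω ∂μ, ‖g ω * eb ω‖ ≤ 1 := by
      filter_upwards [hgb, hebnorm] with ω h1 h2
      rw [norm_mul]
      calc ‖g ω‖ * ‖eb ω‖ ≤ 1 * 1 := mul_le_mul h1 h2 (norm_nonneg _) zero_le_one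
        _ = 1 := by norm_num
    have hsplit : ∫ ω, g ω * Z ω * V ω ∂μ
        = ∫ ω, (g ω * (Z ω - eb ω) * V ω + (g ω * eb ω) * V ω) ∂μ := by
      refine integral_congr_ae (Filter.Eventually.of_forall fun ω => ?_)
      ring
    have hcmeas : AEStronglyMeasurable (fun ω => g ω * (Z ω - eb ω)) μ :=
      hgm.mul (hZmeas.aestronglyMeasurable.sub heb_meas)
    have hcb : ∀ᵐ ω ∂μ, ‖g ω * (Z ω - eb ω)‖ ≤ 1 := by
      filter_upwards [hgb, heb0, heb1] with ω h1 h2 h3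
      rw [norm_mul]
      have hz : ‖Z ω - eb ω‖ ≤ 1 := by
        rw [Real.norm_eq_abs, abs_le]
        exact ⟨by linarith [hZ0 ω], by linarith [hZ1 ω]⟩
      calc ‖g ω‖ * ‖Z ω - eb ω‖ ≤ 1 * 1 := mul_le_mul h1 hz (norm_nonneg _) zero_le_one
        _ = 1 := by norm_num
    have e₁ : Integrable (fun ω => g ω * (Z ω - eb ω) * V ω) μ :=
      hVint.bdd_mul hcmeas hcb
    have e₂ : Integrable (fun ω => (g ω * eb ω) * V ω) μ :=
      hVint.bdd_mul (hgm.mul heb_meas) hgebb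
    rw [hsplit, integral_add e₁ e₂,
      core g hg hgb V (hVint.trim hmW hVmW), zero_add]
    exact Hpull (fun ω => g ω * eb ω) V hgeb hgebb hVint

  have hps' : ∀ᵐ ω ∂μ, estar (X ω, U ω) = eb ω := hps
  have hb1e : ∀ᵐ ω ∂μ, ‖1 - eb ω‖ ≤ 1 := by
    filter_upwards [heb0, heb1] with ω h0 h1
    rw [Real.norm_eq_abs, abs_le]; constructor <;> linarith
  have GEN1 : ∀ (g : Ω → ℝ), StronglyMeasurable[(MeasurableSpace.comap (fun ω => (X ω, U ω)) inferInstance)] g → (∀ᵐ ω ∂μ, ‖g ω‖ ≤ 1) →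
      ∫ ω, g ω * Z ω ∂μ = ∫ ω, g ω * eb ω ∂μ := by
    intro g hg hgb
    have h2 := GEN g hg hgb (fun _ => (1:ℝ)) stronglyMeasurable_const (integrable_const 1)
    rw [condExp_const hm] at h2
    calc ∫ ω, g ω * Z ω ∂μ = ∫ ω, g ω * Z ω * (fun _ => (1:ℝ)) ω ∂μ :=
          integral_congr_ae (Filter.Eventually.of_forall fun ω => by
            show g ω * Z ω = g ω * Z ω * 1; ring)
      _ = ∫ ω, g ω * eb ω * (fun _ => (1:ℝ)) ω ∂μ := h2
      _ = ∫ ω, g ω * eb ω ∂μ := integral_congr_ae (Filter.Eventually.of_forall fun ω => by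
            show g ω * eb ω * 1 = g ω * eb ω; ring)
  -- the four identities
  have hN1 : ∫ ω, Z ω * (1 - estar (X ω, U ω)) * Y ω ∂μ
      = ∫ ω, estar (X ω, U ω) * (1 - estar (X ω, U ω)) * (μ[Y1|(MeasurableSpace.comap (fun ω => (X ω, U ω)) inferInstance)]) ω ∂μ := by
    have h2 := GEN (fun ω => 1 - eb ω) (stronglyMeasurable_const.sub heb_sm) hb1e Y1 hY1mW hY1int
    calc ∫ ω, Z ω * (1 - estar (X ω, U ω)) * Y ω ∂μ
        = ∫ ω, (1 - eb ω) * Z ω * Y1 ω ∂μ := integral_congr_ae (by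
          filter_upwards [hps'] with ω h
          rcases hZbin ω with h0 | h0 <;> rw [hY ω, h0, h] <;> ring)
      _ = ∫ ω, (1 - eb ω) * eb ω * (μ[Y1|(MeasurableSpace.comap (fun ω => (X ω, U ω)) inferInstance)]) ω ∂μ := h2
      _ = ∫ ω, estar (X ω, U ω) * (1 - estar (X ω, U ω)) * (μ[Y1|(MeasurableSpace.comap (fun ω => (X ω, U ω)) inferInstance)]) ω ∂μ :=
          integral_congr_ae (by
            filter_upwards [hps'] with ω h
            rw [h]; ring)
  have hD1 : ∫ ω, Z ω * (1 - estar (X ω, U ω)) ∂μ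
      = ∫ ω, estar (X ω, U ω) * (1 - estar (X ω, U ω)) ∂μ := by
    have h2 := GEN1 (fun ω => 1 - eb ω) (stronglyMeasurable_const.sub heb_sm) hb1e
    calc ∫ ω, Z ω * (1 - estar (X ω, U ω)) ∂μ
        = ∫ ω, (1 - eb ω) * Z ω ∂μ := integral_congr_ae (by
          filter_upwards [hps'] with ω h; rw [h]; ring)
      _ = ∫ ω, (1 - eb ω) * eb ω ∂μ := h2
      _ = ∫ ω, estar (X ω, U ω) * (1 - estar (X ω, U ω)) ∂μ := integral_congr_ae (by
          filter_upwards [hps'] with ω h; rw [h]; ring)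
  have hebZ_int : Integrable (fun ω => eb ω * Z ω) μ :=
    hZint.bdd_mul heb_meas hebnorm
  have hebeb_int : Integrable (fun ω => eb ω * eb ω) μ :=
    heb_int.bdd_mul heb_meas hebnorm
  have hD0 : ∫ ω, (1 - Z ω) * estar (X ω, U ω) ∂μ
      = ∫ ω, estar (X ω, U ω) * (1 - estar (X ω, U ω)) ∂μ := by
    have h2 := GEN1 eb heb_sm hebnorm
    calc ∫ ω, (1 - Z ω) * estar (X ω, U ω) ∂μ
        = ∫ ω, (eb ω - eb ω * Z ω) ∂μ := integral_congr_ae (by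
          filter_upwards [hps'] with ω h; rw [h]; ring)
      _ = ∫ ω, eb ω ∂μ - ∫ ω, eb ω * Z ω ∂μ := integral_sub heb_int hebZ_int
      _ = ∫ ω, eb ω ∂μ - ∫ ω, eb ω * eb ω ∂μ := by rw [h2]
      _ = ∫ ω, (eb ω - eb ω * eb ω) ∂μ := (integral_sub heb_int hebeb_int).symm
      _ = ∫ ω, estar (X ω, U ω) * (1 - estar (X ω, U ω)) ∂μ := integral_congr_ae (by
          filter_upwards [hps'] with ω h; rw [h]; ring)
  have hN0 : ∫ ω, (1 - Z ω) * estar (X ω, U ω) * Y ω ∂μ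
      = ∫ ω, estar (X ω, U ω) * (1 - estar (X ω, U ω)) * (μ[Y0|(MeasurableSpace.comap (fun ω => (X ω, U ω)) inferInstance)]) ω ∂μ := by
    have h2 := GEN eb heb_sm hebnorm Y0 hY0mW hY0int
    have h3 := Hpull eb Y0 heb_sm.aestronglyMeasurable hebnorm hY0int
    have i1 : Integrable (fun ω => eb ω * Y0 ω) μ := hY0int.bdd_mul heb_meas hebnorm
    have i2 : Integrable (fun ω => eb ω * Z ω * Y0 ω) μ := by
      have hZY0 : Integrable (fun ω => Z ω * Y0 ω) μ :=
        hY0int.bdd_mul hZmeas.aestronglyMeasurable (Filter.Eventually.of_forall hZnorm)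
      exact (hZY0.bdd_mul heb_meas hebnorm).congr
        (Filter.Eventually.of_forall fun ω => by ring)
    have j1 : Integrable (fun ω => eb ω * (μ[Y0|(MeasurableSpace.comap (fun ω => (X ω, U ω)) inferInstance)]) ω) μ :=
      integrable_condExp.bdd_mul heb_meas hebnorm
    have j2 : Integrable (fun ω => eb ω * eb ω * (μ[Y0|(MeasurableSpace.comap (fun ω => (X ω, U ω)) inferInstance)]) ω) μ :=
      (j1.bdd_mul heb_meas hebnorm).congr (Filter.Eventually.of_forall fun ω => by ring)
    calc ∫ ω, (1 - Z ω) * estar (X ω, U ω) * Y ω ∂μ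
        = ∫ ω, (eb ω * Y0 ω - eb ω * Z ω * Y0 ω) ∂μ := integral_congr_ae (by
          filter_upwards [hps'] with ω h
          rcases hZbin ω with h0 | h0 <;> rw [hY ω, h0, h] <;> ring)
      _ = ∫ ω, eb ω * Y0 ω ∂μ - ∫ ω, eb ω * Z ω * Y0 ω ∂μ := integral_sub i1 i2
      _ = ∫ ω, eb ω * (μ[Y0|(MeasurableSpace.comap (fun ω => (X ω, U ω)) inferInstance)]) ω ∂μ - ∫ ω, eb ω * eb ω * (μ[Y0|(MeasurableSpace.comap (fun ω => (X ω, U ω)) inferInstance)]) ω ∂μ := by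
          rw [h2, h3]
      _ = ∫ ω, (eb ω * (μ[Y0|(MeasurableSpace.comap (fun ω => (X ω, U ω)) inferInstance)]) ω - eb ω * eb ω * (μ[Y0|(MeasurableSpace.comap (fun ω => (X ω, U ω)) inferInstance)]) ω) ∂μ :=
          (integral_sub j1 j2).symm
      _ = ∫ ω, estar (X ω, U ω) * (1 - estar (X ω, U ω)) * (μ[Y0|(MeasurableSpace.comap (fun ω => (X ω, U ω)) inferInstance)]) ω ∂μ :=
          integral_congr_ae (by
            filter_upwards [hps'] with ω h; rw [h]; ring)
  have hem : AEStronglyMeasurable (fun ω => estar (X ω, U ω) * (1 - estar (X ω, U ω))) μ := by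
    have hm1 : Measurable fun ω => estar (X ω, U ω) := hemeas.comp hXU
    exact (hm1.mul (measurable_const.sub hm1)).aestronglyMeasurable
  have hev : ∀ᵐ ω ∂μ, ‖estar (X ω, U ω) * (1 - estar (X ω, U ω))‖ ≤ 1 := by
    filter_upwards [hps', heb0, heb1] with ω h h0 h1
    rw [h, Real.norm_eq_abs, abs_le]; constructor <;> nlinarith
  have k1 : Integrable (fun ω => estar (X ω, U ω) * (1 - estar (X ω, U ω)) * (μ[Y1|(MeasurableSpace.comap (fun ω => (X ω, U ω)) inferInstance)]) ω) μ :=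
    integrable_condExp.bdd_mul hem hev
  have k0 : Integrable (fun ω => estar (X ω, U ω) * (1 - estar (X ω, U ω)) * (μ[Y0|(MeasurableSpace.comap (fun ω => (X ω, U ω)) inferInstance)]) ω) μ :=
    integrable_condExp.bdd_mul hem hev
  have hsubc : μ[(fun ω' => Y1 ω' - Y0 ω')|(MeasurableSpace.comap (fun ω => (X ω, U ω)) inferInstance)]
      =ᵐ[μ] fun ω => (μ[Y1|(MeasurableSpace.comap (fun ω => (X ω, U ω)) inferInstance)]) ω - (μ[Y0|(MeasurableSpace.comap (fun ω => (X ω, U ω)) inferInstance)]) ω := by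
    refine (condExp_congr_ae (f := fun ω' => Y1 ω' - Y0 ω') (g := Y1 - Y0)
      (Filter.Eventually.of_forall fun ω => rfl)).trans ?_
    refine (condExp_sub hY1int hY0int _).trans ?_
    exact Filter.Eventually.of_forall fun ω => rfl
  have hT : ∫ ω, estar (X ω, U ω) * (1 - estar (X ω, U ω))
        * (μ[(fun ω' => Y1 ω' - Y0 ω')|(MeasurableSpace.comap (fun ω => (X ω, U ω)) inferInstance)]) ω ∂μ
      = ∫ ω, estar (X ω, U ω) * (1 - estar (X ω, U ω)) * (μ[Y1|(MeasurableSpace.comap (fun ω => (X ω, U ω)) inferInstance)]) ω ∂μ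
        - ∫ ω, estar (X ω, U ω) * (1 - estar (X ω, U ω)) * (μ[Y0|(MeasurableSpace.comap (fun ω => (X ω, U ω)) inferInstance)]) ω ∂μ := by
    calc ∫ ω, estar (X ω, U ω) * (1 - estar (X ω, U ω))
          * (μ[(fun ω' => Y1 ω' - Y0 ω')|(MeasurableSpace.comap (fun ω => (X ω, U ω)) inferInstance)]) ω ∂μ
        = ∫ ω, (estar (X ω, U ω) * (1 - estar (X ω, U ω)) * (μ[Y1|(MeasurableSpace.comap (fun ω => (X ω, U ω)) inferInstance)]) ω
            - estar (X ω, U ω) * (1 - estar (X ω, U ω)) * (μ[Y0|(MeasurableSpace.comap (fun ω => (X ω, U ω)) inferInstance)]) ω) ∂μ := by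
          refine integral_congr_ae ?_
          filter_upwards [hsubc] with ω hω
          rw [hω]; ring
      _ = _ := integral_sub k1 k0
  rw [hT, hN1, hN0, hD1, hD0, sub_div]
end

section
/- Let W₁⋆, …, Wₙ⋆ be random variables that, conditional on binary labels Z₁,…,Zₙ, are independent, with P(|Wᵢ⋆| ≤ log Λ_z | Zᵢ = z) ≥ 1 − δ_z for z ∈ {0,1}. Let n_z = #{i : Zᵢ = z}, and choose δ'_{n,z} so that n_z δ'_{n,z} is the √(1−ζ)-quantile of Binomial(n_z, δ_z). Then P( for both z = 0,1: Σ_{i:Zᵢ=z} 1{|Wᵢ⋆| ≤ log Λ_z} ≥ n_z(1−δ'_{n,z}) ) ≥ 1 − ζ. -/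
open MeasureTheory ProbabilityTheory

/-- The CDF of the Binomial(m, p) distribution at `k`. -/
noncomputable def binomCDF (m : ℕ) (p : ℝ) (k : ℕ) : ℝ :=
  ∑ j ∈ Finset.range (k + 1), (m.choose j : ℝ) * p ^ j * (1 - p) ^ (m - j)

/-- The `q`-quantile of Binomial(m, p): the smallest `k` with `P(Bin(m,p) ≤ k) ≥ q`. -/
noncomputable def binomQuantile (m : ℕ) (p q : ℝ) : ℕ :=
  sInf {k : ℕ | q ≤ binomCDF m p k}

lemma binomCDF_succ (m : ℕ) (p : ℝ) (k : ℕ) :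
    binomCDF m p (k+1) = binomCDF m p k
      + (m.choose (k+1) : ℝ) * p ^ (k+1) * (1 - p) ^ (m - (k+1)) := by
  simp [binomCDF, Finset.sum_range_succ]

lemma binomCDF_zero_right (m : ℕ) (p : ℝ) : binomCDF m p 0 = (1 - p) ^ m := by
  simp [binomCDF]

lemma binomCDF_zero_left (p : ℝ) (k : ℕ) : binomCDF 0 p k = 1 := by
  induction k with
  | zero => simp [binomCDF]
  | succ k ih => rw [binomCDF_succ, ih]; simp

lemma binom_term_pascal (n j : ℕ) (p : ℝ) :
    ((n+1).choose (j+1) : ℝ) * p ^ (j+1) * (1 - p) ^ ((n+1) - (j+1))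
      = (1 - p) * ((n.choose (j+1) : ℝ) * p ^ (j+1) * (1 - p) ^ (n - (j+1)))
        + p * ((n.choose j : ℝ) * p ^ j * (1 - p) ^ (n - j)) := by
  rw [Nat.succ_sub_succ, Nat.choose_succ_succ]
  push_cast
  rcases le_or_gt (j+1) n with h | h
  · have h1 : n - j = (n - (j+1)) + 1 := by omega
    rw [h1]; ring
  · rw [Nat.choose_eq_zero_of_lt h]
    push_cast
    ring

lemma binomCDF_pascal (n k : ℕ) (p : ℝ) :
    binomCDF (n+1) p (k+1) = (1 - p) * binomCDF n p (k+1) + p * binomCDF n p k := by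
  induction k with
  | zero =>
    rw [binomCDF_succ, binomCDF_succ, binomCDF_zero_right, binomCDF_zero_right,
      binom_term_pascal]
    simp
    ring
  | succ k ih =>
    rw [binomCDF_succ (n+1) p (k+1), ih, binom_term_pascal,
      binomCDF_succ n p (k+1), binomCDF_succ n p k]
    ring

lemma binomCDF_nonneg (m : ℕ) (p : ℝ) (k : ℕ) (h0 : 0 ≤ p) (h1 : p ≤ 1) :
    0 ≤ binomCDF m p k := by
  apply Finset.sum_nonneg
  intro j _
  have h2 : (0:ℝ) ≤ 1 - p := by linarith
  exact mul_nonneg (mul_nonneg (by positivity) (pow_nonneg h0 _)) (pow_nonneg h2 _)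

lemma binomCDF_self (m : ℕ) (p : ℝ) : binomCDF m p m = 1 := by
  calc binomCDF m p m = (p + (1-p))^m := by
        rw [add_pow]; exact Finset.sum_congr rfl fun j _ => by ring
    _ = 1 := by norm_num

lemma binomQuantile_spec (m : ℕ) (p q : ℝ) (hq : q ≤ 1) :
    q ≤ binomCDF m p (binomQuantile m p q) := by
  have hne : {k : ℕ | q ≤ binomCDF m p k}.Nonempty :=
    ⟨m, by rw [Set.mem_setOf_eq, binomCDF_self]; exact hq⟩
  exact Nat.sInf_mem hne

lemma binom_dom {Ω ι : Type*} [MeasurableSpace Ω] [DecidableEq ι] (ν : Measure Ω)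
    [IsProbabilityMeasure ν] (Y : ι → Ω → ℝ) (hmeas : ∀ i, Measurable (Y i))
    (hindep : iIndepFun Y ν)
    (hrange : ∀ i ω, Y i ω = 0 ∨ Y i ω = 1)
    (p : ℝ) (hp0 : 0 ≤ p) (hp1 : p ≤ 1)
    (S : Finset ι) (hS : ∀ i ∈ S, (ν {ω | Y i ω = 1}).toReal ≤ p) (k : ℕ) :
    binomCDF S.card p k ≤ (ν {ω | ∑ i ∈ S, Y i ω ≤ (k:ℝ)}).toReal := by
  induction S using Finset.induction_on generalizing k with
  | empty =>
    have huniv : {ω : Ω | ∑ i ∈ (∅ : Finset ι), Y i ω ≤ (k:ℝ)} = Set.univ := by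
      ext ω; simp
    rw [huniv, measure_univ, Finset.card_empty, binomCDF_zero_left]
    norm_num
  | @insert a s ha ih =>
    have hS' : ∀ i ∈ s, (ν {ω | Y i ω = 1}).toReal ≤ p := fun i hi =>
      hS i (Finset.mem_insert_of_mem hi)
    have hSa : (ν {ω | Y a ω = 1}).toReal ≤ p := hS a (Finset.mem_insert_self a s)
    have hTmeas : Measurable (∑ i ∈ s, Y i) := by
      rw [Finset.sum_fn]
      exact Finset.measurable_sum s fun i _ => hmeas i
    have hIndep : IndepFun (∑ i ∈ s, Y i) (Y a) ν :=
      hindep.indepFun_finsetSum_of_notMem hmeas ha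
    set T : Ω → ℝ := ∑ i ∈ s, Y i with hT
    have hTapp : ∀ ω, T ω = ∑ i ∈ s, Y i ω := fun ω => Finset.sum_apply ω s Y
    set E : ℕ → Set Ω := fun c => T ⁻¹' Set.Iic (c : ℝ) with hE
    have hEset : ∀ c : ℕ, {ω | ∑ i ∈ s, Y i ω ≤ (c:ℝ)} = E c := by
      intro c; ext ω; simp [hE, Set.mem_preimage, hTapp]
    set A0 : Set Ω := Y a ⁻¹' {0} with hA0
    set A1 : Set Ω := Y a ⁻¹' {1} with hA1
    have hA1set : {ω | Y a ω = 1} = A1 := rfl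
    have hA1meas : MeasurableSet A1 := (hmeas a) (measurableSet_singleton 1)
    have hA0meas : MeasurableSet A0 := (hmeas a) (measurableSet_singleton 0)
    have hEmeas : ∀ c : ℕ, MeasurableSet (E c) := fun c => hTmeas measurableSet_Iic
    have hmul : ∀ (c : ℕ) (x : ℝ),
        ν (E c ∩ Y a ⁻¹' {x}) = ν (E c) * ν (Y a ⁻¹' {x}) := fun c x =>
      hIndep.measure_inter_preimage_eq_mul _ _ measurableSet_Iic (measurableSet_singleton x)
    have hA0compl : A0 = A1ᶜ := by
      ext ω
      rcases hrange a ω with h | h <;> simp [hA0, hA1, h]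
    have hq1le : ν A1 ≤ 1 := prob_le_one
    have hA0toReal : (ν A0).toReal = 1 - (ν A1).toReal := by
      rw [hA0compl, measure_compl hA1meas (measure_ne_top _ _), measure_univ,
        ENNReal.toReal_sub_of_le hq1le (by simp)]
      simp
    set q1 : ℝ := (ν A1).toReal with hq1
    have hq1nonneg : 0 ≤ q1 := ENNReal.toReal_nonneg
    have hq1lep : q1 ≤ p := hSa
    have hTnonneg : ∀ ω, 0 ≤ T ω := by
      intro ω
      rw [hTapp]
      apply Finset.sum_nonneg
      intro i _
      rcases hrange i ω with h | h <;> rw [h] <;> norm_num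
    have hYa : ∀ ω, 0 ≤ Y a ω := by
      intro ω; rcases hrange a ω with h | h <;> rw [h] <;> norm_num
    have hcard : (insert a s).card = s.card + 1 := Finset.card_insert_of_notMem ha
    have hihE : ∀ c : ℕ, binomCDF s.card p c ≤ (ν (E c)).toReal := by
      intro c
      rw [← hEset c]
      exact ih hS' c
    have hEnonneg : ∀ c : ℕ, 0 ≤ (ν (E c)).toReal := fun c => ENNReal.toReal_nonneg
    rcases k with _ | k'
    · -- k = 0
      have hset : {ω | ∑ i ∈ insert a s, Y i ω ≤ ((0:ℕ):ℝ)} = E 0 ∩ A0 := by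
        ext ω
        simp only [Set.mem_setOf_eq, Finset.sum_insert ha, Set.mem_inter_iff, hE,
          Set.mem_preimage, Set.mem_Iic, hA0, Set.mem_singleton_iff, hTapp,
          Nat.cast_zero]
        constructor
        · intro h
          have h0 := hTnonneg ω
          rw [hTapp] at h0
          have h1 := hYa ω
          rcases hrange a ω with h2 | h2
          · exact ⟨by linarith, h2⟩
          · rw [h2] at h; constructor <;> linarith
        · rintro ⟨h1, h2⟩; rw [h2]; linarith
      rw [hset, hmul 0 0]
      rw [ENNReal.toReal_mul]
      rw [hcard, binomCDF_zero_right]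
      have h1 : binomCDF s.card p 0 ≤ (ν (E 0)).toReal := hihE 0
      rw [binomCDF_zero_right] at h1
      have h2 : (1 : ℝ) - p ≤ (ν A0).toReal := by rw [hA0toReal]; linarith
      have h3 : (0:ℝ) ≤ 1 - p := by linarith
      calc (1-p)^(s.card + 1) = (1-p)^s.card * (1-p) := by ring
        _ ≤ (ν (E 0)).toReal * (ν A0).toReal := by
            apply mul_le_mul h1 h2 h3 (hEnonneg 0)
    · -- k = k' + 1
      have hset : {ω | ∑ i ∈ insert a s, Y i ω ≤ ((k'+1:ℕ):ℝ)}
          = (E (k'+1) ∩ A0) ∪ (E k' ∩ A1) := by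
        ext ω
        simp only [Set.mem_setOf_eq, Finset.sum_insert ha, Set.mem_union, Set.mem_inter_iff,
          hE, Set.mem_preimage, Set.mem_Iic, hA0, hA1, Set.mem_singleton_iff, hTapp]
        push_cast
        rcases hrange a ω with h | h <;> rw [h]
        · constructor
          · intro h2; left; exact ⟨by linarith, rfl⟩
          · rintro (⟨h2, _⟩ | ⟨h2, h3⟩) <;> linarith
        · constructor
          · intro h2; right; exact ⟨by linarith, rfl⟩
          · rintro (⟨h2, h3⟩ | ⟨h2, _⟩) <;> linarith
      have hdisj : Disjoint (E (k'+1) ∩ A0) (E k' ∩ A1) := by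
        apply Set.disjoint_left.mpr
        rintro ω ⟨_, h0⟩ ⟨_, h1⟩
        have : Y a ω = 0 := h0
        have h1' : Y a ω = 1 := h1
        rw [this] at h1'
        norm_num at h1'
      rw [hset, measure_union hdisj ((hEmeas k').inter hA1meas), hmul _ 0, hmul _ 1,
        ENNReal.toReal_add (by finiteness) (by finiteness), ENNReal.toReal_mul,
        ENNReal.toReal_mul]
      have hB := hihE (k'+1)
      have hC := hihE k'
      have hmono : (ν (E k')).toReal ≤ (ν (E (k'+1))).toReal := by
        apply ENNReal.toReal_mono (measure_ne_top _ _)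
        apply measure_mono
        intro ω h
        simp only [hE, Set.mem_preimage, Set.mem_Iic] at h ⊢
        push_cast
        push_cast at h
        linarith
      rw [hcard, binomCDF_pascal, hA0toReal, ← hq1]
      have e1 : (0:ℝ) ≤ (ν (E (k'+1))).toReal - (ν (E k')).toReal := by linarith
      nlinarith [binomCDF_nonneg s.card p k' hp0 hp1, binomCDF_nonneg s.card p (k'+1) hp0 hp1,
        mul_le_mul_of_nonneg_right hq1lep e1, hEnonneg k', hEnonneg (k'+1)]

lemma group_bound {Ω : Type*} [MeasurableSpace Ω] (ν : Measure Ω)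
    [IsProbabilityMeasure ν] (n : ℕ) (W : Fin n → Ω → ℝ) (zv : Fin n → Bool)
    (Λ δ : Bool → ℝ) (ζ : ℝ)
    (hWmeas : ∀ i, Measurable (W i))
    (hδ0 : ∀ z, 0 ≤ δ z) (hδ1 : ∀ z, δ z ≤ 1) (hζ : ζ ∈ Set.Ioo (0:ℝ) 1)
    (hindep : iIndepFun W ν)
    (htail : ∀ i, 1 - δ (zv i) ≤ (ν {ω | |W i ω| ≤ Real.log (Λ (zv i))}).toReal) :
    1 - ζ ≤ (ν {ω | ∀ z : Bool,
        (Finset.univ.filter fun i => zv i = z).card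
          - binomQuantile ((Finset.univ.filter fun i => zv i = z).card) (δ z)
              (Real.sqrt (1 - ζ))
        ≤ (Finset.univ.filter fun i =>
            zv i = z ∧ |W i ω| ≤ Real.log (Λ z)).card}).toReal := by
  classical
  set g : Fin n → ℝ → ℝ :=
    fun i x => if |x| ≤ Real.log (Λ (zv i)) then (0:ℝ) else 1 with hg
  have hgmeas : ∀ i, Measurable (g i) := by
    intro i
    apply Measurable.ite _ measurable_const measurable_const
    exact measurableSet_le continuous_abs.measurable measurable_const
  set Y : Fin n → Ω → ℝ := fun i ω => g i (W i ω) with hY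
  have hYmeas : ∀ i, Measurable (Y i) := fun i => (hgmeas i).comp (hWmeas i)
  have hYindep : iIndepFun Y ν := hindep.comp g hgmeas
  have hYrange : ∀ i ω, Y i ω = 0 ∨ Y i ω = 1 := by
    intro i ω
    by_cases h : |W i ω| ≤ Real.log (Λ (zv i)) <;> simp [hY, hg, h]
  have hY1 : ∀ i, (ν {ω | Y i ω = 1}).toReal ≤ δ (zv i) := by
    intro i
    have hAmeas : MeasurableSet {ω | |W i ω| ≤ Real.log (Λ (zv i))} :=
      (hWmeas i) (measurableSet_le continuous_abs.measurable measurable_const : MeasurableSet {x : ℝ | |x| ≤ Real.log (Λ (zv i))})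
    have hset : {ω | Y i ω = 1} = {ω | |W i ω| ≤ Real.log (Λ (zv i))}ᶜ := by
      ext ω
      by_cases h : |W i ω| ≤ Real.log (Λ (zv i))
      · simp [hY, hg, h]
      · simp only [hY, hg, if_neg h, Set.mem_setOf_eq, Set.mem_compl_iff]
        simpa using h
    rw [hset, measure_compl hAmeas (measure_ne_top _ _), measure_univ,
      ENNReal.toReal_sub_of_le prob_le_one (by simp)]
    have := htail i
    simp only [ENNReal.toReal_one]
    linarith
  set S : Bool → Finset (Fin n) := fun z => Finset.univ.filter fun i => zv i = z with hS
  set q : Bool → ℕ := fun z =>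
    binomQuantile ((S z).card) (δ z) (Real.sqrt (1 - ζ)) with hq
  set F : Bool → Set Ω := fun z => {ω | ∑ i ∈ S z, Y i ω ≤ ((q z : ℕ) : ℝ)} with hF
  have hsqrt1 : Real.sqrt (1 - ζ) ≤ 1 := Real.sqrt_le_one.mpr (by linarith [hζ.1])
  have hsqrt0 : 0 ≤ Real.sqrt (1 - ζ) := Real.sqrt_nonneg _
  have hFz : ∀ z, Real.sqrt (1 - ζ) ≤ (ν (F z)).toReal := by
    intro z
    refine le_trans (binomQuantile_spec ((S z).card) (δ z) (Real.sqrt (1 - ζ)) hsqrt1) ?_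
    exact binom_dom ν Y hYmeas hYindep hYrange (δ z) (hδ0 z) (hδ1 z) (S z)
      (fun i hi => by
        have hz : zv i = z := (Finset.mem_filter.mp hi).2
        have := hY1 i
        rwa [hz] at this) (q z)
  -- independence of the two group events
  have hdisj : Disjoint (S false) (S true) := by
    rw [Finset.disjoint_left]
    intro i h1 h2
    have e1 := (Finset.mem_filter.mp h1).2
    have e2 := (Finset.mem_filter.mp h2).2
    rw [e1] at e2; exact Bool.false_ne_true e2
  have hI := hYindep.indepFun_finset (S false) (S true) hdisj hYmeas
  have hφmeas : ∀ z : Bool, Measurable (fun v : (i : S z) → ℝ => ∑ i, v i) :=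
    fun z => Finset.measurable_sum Finset.univ fun i _ => measurable_pi_apply i
  have hI2 : IndepFun (fun a => ∑ i : S false, Y i a) (fun a => ∑ i : S true, Y i a) ν :=
    hI.comp (hφmeas false) (hφmeas true)
  have hsc : ∀ z : Bool, (fun a : Ω => ∑ i : S z, Y (↑i) a) = fun a => ∑ i ∈ S z, Y i a := by
    intro z; funext a; exact Finset.sum_coe_sort (S z) (fun i => Y i a)
  have hI2' : IndepFun (fun a => ∑ i ∈ S false, Y i a) (fun a => ∑ i ∈ S true, Y i a) ν := by
    rw [← hsc false, ← hsc true]; exact hI2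
  have hFeq : ∀ z : Bool, F z = (fun a => ∑ i ∈ S z, Y i a) ⁻¹' Set.Iic ((q z : ℕ) : ℝ) :=
    fun z => rfl
  have hprod : ν (F false ∩ F true) = ν (F false) * ν (F true) := by
    rw [hFeq false, hFeq true]
    exact hI2'.measure_inter_preimage_eq_mul _ _ measurableSet_Iic measurableSet_Iic
  -- inclusion into the target event
  have hsub : F false ∩ F true ⊆ {ω | ∀ z : Bool,
      (Finset.univ.filter fun i => zv i = z).card
        - binomQuantile ((Finset.univ.filter fun i => zv i = z).card) (δ z)
            (Real.sqrt (1 - ζ))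
      ≤ (Finset.univ.filter fun i =>
          zv i = z ∧ |W i ω| ≤ Real.log (Λ z)).card} := by
    rintro ω ⟨hf, ht⟩
    intro z
    have hb : ∑ i ∈ S z, Y i ω ≤ ((q z : ℕ) : ℝ) := by cases z; exact hf; exact ht
    have hsum : ∑ i ∈ S z, Y i ω
        = (((S z).filter fun i => ¬ (|W i ω| ≤ Real.log (Λ z))).card : ℝ) := by
      rw [show ∑ i ∈ S z, Y i ω
          = ∑ i ∈ S z, (if ¬ (|W i ω| ≤ Real.log (Λ z)) then (1:ℝ) else 0) from
        Finset.sum_congr rfl fun i hi => by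
          have hz : zv i = z := (Finset.mem_filter.mp hi).2
          simp only [hY, hg, hz, ite_not]]
      rw [Finset.sum_boole]
    have hfail : ((S z).filter fun i => ¬ (|W i ω| ≤ Real.log (Λ z))).card ≤ q z := by
      rw [hsum] at hb; exact_mod_cast hb
    have hsplit := Finset.card_filter_add_card_filter_not
      (s := S z) (p := fun i => |W i ω| ≤ Real.log (Λ z))
    have htarget : (Finset.univ.filter fun i =>
        zv i = z ∧ |W i ω| ≤ Real.log (Λ z))
        = (S z).filter fun i => |W i ω| ≤ Real.log (Λ z) := by
      rw [hS]
      rw [Finset.filter_filter]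
    rw [htarget]
    have hSz : (Finset.univ.filter fun i => zv i = z) = S z := rfl
    rw [hSz]
    have hqz : binomQuantile (S z).card (δ z) (Real.sqrt (1 - ζ)) = q z := rfl
    rw [hqz]
    omega
  have hmono := ENNReal.toReal_mono (measure_ne_top ν _) (measure_mono hsub)
  refine le_trans ?_ hmono
  rw [hprod, ENNReal.toReal_mul]
  have h1 := hFz false
  have h2 := hFz true
  calc 1 - ζ = Real.sqrt (1 - ζ) * Real.sqrt (1 - ζ) := by
        rw [Real.mul_self_sqrt (by linarith [hζ.2])]
    _ ≤ (ν (F false)).toReal * (ν (F true)).toReal :=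
        mul_le_mul h1 h2 hsqrt0 ENNReal.toReal_nonneg

/-- Suppose that conditionally on the binary labels `Z₁, …, Zₙ`, the random variables
`W₁⋆, …, Wₙ⋆` are independent with `P(|Wᵢ⋆| ≤ log Λ_z ∣ Zᵢ = z) ≥ 1 − δ_z`.  With
`n_z δ'_{n,z}` set to the `√(1−ζ)`-quantile of Binomial(n_z, δ_z), the event that for
both groups `z ∈ {0,1}` at least `n_z(1−δ'_{n,z})` of the `|Wᵢ⋆|` (with `Zᵢ = z`) are
bounded by `log Λ_z` has probability at least `1 − ζ`. -/
theorem stmt10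
    {Ω : Type*} [MeasurableSpace Ω] (μ : Measure Ω) [IsProbabilityMeasure μ]
    (n : ℕ) (W : Fin n → Ω → ℝ) (Z : Fin n → Ω → Bool)
    (Λ δ : Bool → ℝ) (ζ : ℝ)
    (hWmeas : ∀ i, Measurable (W i)) (hZmeas : ∀ i, Measurable (Z i))
    (hΛ : ∀ z, 1 ≤ Λ z) (hδ0 : ∀ z, 0 ≤ δ z) (hδ1 : ∀ z, δ z ≤ 1)
    (hζ : ζ ∈ Set.Ioo (0:ℝ) 1)
    -- conditionally on the labels, the `Wᵢ⋆` are independent with the stated tail bound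
    (hcond : ∀ zv : Fin n → Bool, μ {ω | ∀ i, Z i ω = zv i} ≠ 0 →
      iIndepFun W (μ[|{ω | ∀ i, Z i ω = zv i}]) ∧
      ∀ i, 1 - δ (zv i)
        ≤ ((μ[|{ω | ∀ i, Z i ω = zv i}])
            {ω | |W i ω| ≤ Real.log (Λ (zv i))}).toReal) :
    1 - ζ ≤ (μ {ω | ∀ z : Bool,
        (Finset.univ.filter fun i => Z i ω = z).card
          - binomQuantile ((Finset.univ.filter fun i => Z i ω = z).card) (δ z)
              (Real.sqrt (1 - ζ))
        ≤ (Finset.univ.filter fun i =>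
            Z i ω = z ∧ |W i ω| ≤ Real.log (Λ z)).card}).toReal := by
  classical
  set G : Set Ω := {ω | ∀ z : Bool,
        (Finset.univ.filter fun i => Z i ω = z).card
          - binomQuantile ((Finset.univ.filter fun i => Z i ω = z).card) (δ z)
              (Real.sqrt (1 - ζ))
        ≤ (Finset.univ.filter fun i =>
            Z i ω = z ∧ |W i ω| ≤ Real.log (Λ z)).card} with hG
  set s : (Fin n → Bool) → Set Ω := fun zv => {ω | ∀ i, Z i ω = zv i} with hs
  have hsmeas : ∀ zv, MeasurableSet (s zv) := by
    intro zv
    have : s zv = ⋂ i, (Z i) ⁻¹' {zv i} := by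
      ext ω; simp [hs, Set.mem_iInter]
    rw [this]
    exact MeasurableSet.iInter fun i => (hZmeas i) (measurableSet_singleton (zv i))
  -- measurability of G
  have hcntZ : ∀ z : Bool, Measurable fun ω => (Finset.univ.filter fun i => Z i ω = z).card := by
    intro z
    have : (fun ω => (Finset.univ.filter fun i => Z i ω = z).card)
        = fun ω => ∑ i : Fin n, (if Z i ω = z then 1 else 0) := by
      funext ω; rw [Finset.card_filter]
    rw [this]
    apply Finset.measurable_sum
    intro i _
    have hm : MeasurableSet {ω | Z i ω = z} := (hZmeas i) (measurableSet_singleton z)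
    exact Measurable.ite hm measurable_const measurable_const
  have hcntW : ∀ z : Bool, Measurable fun ω =>
      (Finset.univ.filter fun i => Z i ω = z ∧ |W i ω| ≤ Real.log (Λ z)).card := by
    intro z
    have : (fun ω => (Finset.univ.filter fun i => Z i ω = z ∧ |W i ω| ≤ Real.log (Λ z)).card)
        = fun ω => ∑ i : Fin n, (if Z i ω = z ∧ |W i ω| ≤ Real.log (Λ z) then 1 else 0) := by
      funext ω; rw [Finset.card_filter]
    rw [this]
    apply Finset.measurable_sum
    intro i _
    have hm1 : MeasurableSet {ω | Z i ω = z} := (hZmeas i) (measurableSet_singleton z)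
    have hm2 : MeasurableSet {ω | |W i ω| ≤ Real.log (Λ z)} :=
      (hWmeas i) (measurableSet_le continuous_abs.measurable measurable_const :
        MeasurableSet {x : ℝ | |x| ≤ Real.log (Λ z)})
    exact Measurable.ite (hm1.inter hm2) measurable_const measurable_const
  have hGmeas : MeasurableSet G := by
    have : G = ⋂ z : Bool, {ω |
        (Finset.univ.filter fun i => Z i ω = z).card
          - binomQuantile ((Finset.univ.filter fun i => Z i ω = z).card) (δ z)
              (Real.sqrt (1 - ζ))
        ≤ (Finset.univ.filter fun i =>
            Z i ω = z ∧ |W i ω| ≤ Real.log (Λ z)).card} := by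
      ext ω; simp [hG, Set.mem_iInter]
    rw [this]
    apply MeasurableSet.iInter
    intro z
    have hf : Measurable fun ω =>
        (Finset.univ.filter fun i => Z i ω = z).card
          - binomQuantile ((Finset.univ.filter fun i => Z i ω = z).card) (δ z)
              (Real.sqrt (1 - ζ)) := by
      exact (measurable_from_top (f := fun m : ℕ =>
        m - binomQuantile m (δ z) (Real.sqrt (1 - ζ)))).comp (hcntZ z)
    exact measurableSet_le hf (hcntW z)
  -- pairwise disjointness
  have hdisj : ∀ zv zv' : Fin n → Bool, zv ≠ zv' → Disjoint (s zv) (s zv') := by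
    intro zv zv' hne
    rw [Set.disjoint_left]
    intro ω h1 h2
    exact hne (funext fun i => (h1 i).symm.trans (h2 i))
  have hcover : ⋃ zv ∈ (Finset.univ : Finset (Fin n → Bool)), s zv = Set.univ := by
    ext ω
    simp only [Set.mem_iUnion, Set.mem_univ, iff_true, Finset.mem_univ, exists_true_left]
    exact ⟨fun i => Z i ω, fun i => rfl⟩
  have hpd : (↑(Finset.univ : Finset (Fin n → Bool)) : Set (Fin n → Bool)).PairwiseDisjoint s :=
    fun zv _ zv' _ hne => hdisj zv zv' hne
  have hsum1 : ∑ zv : Fin n → Bool, μ (s zv) = 1 := by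
    rw [← measure_biUnion_finset hpd (fun zv _ => hsmeas zv), hcover, measure_univ]
  -- the per-configuration bound
  have hkey : ∀ zv : Fin n → Bool,
      μ (s zv) * ENNReal.ofReal (1 - ζ) ≤ μ (s zv ∩ G) := by
    intro zv
    by_cases h : μ (s zv) = 0
    · rw [h, zero_mul]
      exact bot_le
    · set ν := μ[|s zv] with hν
      haveI : IsProbabilityMeasure ν := cond_isProbabilityMeasure h
      obtain ⟨hWindep, htail⟩ := hcond zv h
      have hgb := group_bound ν n W zv Λ δ ζ hWmeas hδ0 hδ1 hζ hWindep htail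
      set T : Set Ω := {ω | ∀ z : Bool,
          (Finset.univ.filter fun i => zv i = z).card
            - binomQuantile ((Finset.univ.filter fun i => zv i = z).card) (δ z)
                (Real.sqrt (1 - ζ))
          ≤ (Finset.univ.filter fun i =>
              zv i = z ∧ |W i ω| ≤ Real.log (Λ z)).card} with hT
      have hνT : ENNReal.ofReal (1 - ζ) ≤ ν T :=
        ENNReal.ofReal_le_of_le_toReal hgb
      have hsub : s zv ∩ T ⊆ s zv ∩ G := by
        rintro ω ⟨hω, hωT⟩
        refine ⟨hω, ?_⟩
        intro z
        have hfz : (Finset.univ.filter fun i => Z i ω = z)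
            = Finset.univ.filter fun i => zv i = z := by
          apply Finset.filter_congr
          intro i _
          rw [hω i]
        have hfw : (Finset.univ.filter fun i => Z i ω = z ∧ |W i ω| ≤ Real.log (Λ z))
            = Finset.univ.filter fun i => zv i = z ∧ |W i ω| ≤ Real.log (Λ z) := by
          apply Finset.filter_congr
          intro i _
          rw [hω i]
        rw [hfz, hfw]
        exact hωT z
      have hcnd : μ (s zv) * ν T = μ (s zv ∩ T) := by
        rw [hν, cond_apply (hsmeas zv), ← mul_assoc,
          ENNReal.mul_inv_cancel h (measure_ne_top μ _), one_mul]
      calc μ (s zv) * ENNReal.ofReal (1 - ζ)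
          ≤ μ (s zv) * ν T := mul_le_mul_right hνT _
        _ = μ (s zv ∩ T) := hcnd
        _ ≤ μ (s zv ∩ G) := measure_mono hsub
  have hpd' : (↑(Finset.univ : Finset (Fin n → Bool)) : Set (Fin n → Bool)).PairwiseDisjoint
      (fun zv => s zv ∩ G) := fun zv _ zv' _ hne =>
    (hdisj zv zv' hne).mono Set.inter_subset_left Set.inter_subset_left
  have hsum2 : ∑ zv : Fin n → Bool, μ (s zv ∩ G) ≤ μ G := by
    rw [← measure_biUnion_finset hpd' (fun zv _ => (hsmeas zv).inter hGmeas)]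
    apply measure_mono
    simp only [Set.iUnion_subset_iff]
    intro zv _
    exact Set.inter_subset_right
  have hfinal : ENNReal.ofReal (1 - ζ) ≤ μ G := by
    calc ENNReal.ofReal (1 - ζ) = 1 * ENNReal.ofReal (1 - ζ) := (one_mul _).symm
      _ = (∑ zv : Fin n → Bool, μ (s zv)) * ENNReal.ofReal (1 - ζ) := by rw [hsum1]
      _ = ∑ zv : Fin n → Bool, μ (s zv) * ENNReal.ofReal (1 - ζ) := Finset.sum_mul _ _ _
      _ ≤ ∑ zv : Fin n → Bool, μ (s zv ∩ G) := Finset.sum_le_sum fun zv _ => hkey zv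
      _ ≤ μ G := hsum2
  have hfin2 := ENNReal.toReal_mono (measure_ne_top μ G) hfinal
  rwa [ENNReal.toReal_ofReal (by linarith [hζ.2])] at hfin2
end

section
/- Charnes–Cooper-type transformation: the fractional optimization of (Σ_{i=1}^{n₁} ωᵢ Yᵢ)/(Σ_{i=1}^{n₁} ωᵢ) − (Σ_{i=n₁+1}^{n} ωᵢ Yᵢ)/(Σ_{i=n₁+1}^{n} ωᵢ) over ω ∈ ∏ᵢ [ℓᵢ, uᵢ] with 0 ≤ ℓᵢ ≤ uᵢ, ℓᵢ > 0 for at least one i in each group and subject to (Σ_{i≤n₁} ωᵢ g(Xᵢ))/(Σ_{i≤n₁} ωᵢ) = (Σ_{i>n₁} ωᵢ g(Xᵢ))/(Σ_{i>n₁} ωᵢ), has the same optimal value as the linear program over (ω̄, t₁, t₀) maximizing Σ_{i≤n₁} ω̄ᵢYᵢ − Σ_{i>n₁} ω̄ᵢYᵢ subject to ℓᵢ t_{Zᵢ} ≤ ω̄ᵢ ≤ uᵢ t_{Zᵢ}, Σ_{i≤n₁} ω̄ᵢ = 1, Σ_{i>n₁} ω̄ᵢ = 1, Σ_{i≤n₁}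 ω̄ᵢ g(Xᵢ) = Σ_{i>n₁} ω̄ᵢ g(Xᵢ), t₁ ≥ 0, t₀ ≥ 0, via the bijection ω̄ᵢ = ωᵢ/Σ_{j: Z_j = Z_i} ω_j and t_z = 1/Σ_{j: Z_j = z} ω_j. -/
/-- The set of treated indices: the first `n₁` of the `n₁ + n₀` units. -/
def treatedSet (n₁ n₀ : ℕ) : Finset (Fin (n₁ + n₀)) :=
  Finset.univ.filter fun i => (i : ℕ) < n₁

/-- Attainable values of the fractional program: the difference of weighted group means
of `Y` over weights `ω` in the box `∏ᵢ [l i, u i]`, subject to positivity of the group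
sums and the covariate-balance constraint for `G`. -/
def fracVals (n₁ n₀ d : ℕ) (Y : Fin (n₁ + n₀) → ℝ) (G : Fin (n₁ + n₀) → Fin d → ℝ)
    (l u : Fin (n₁ + n₀) → ℝ) : Set ℝ :=
  {v : ℝ | ∃ ω : Fin (n₁ + n₀) → ℝ,
    (∀ i, ω i ∈ Set.Icc (l i) (u i)) ∧
    0 < ∑ i ∈ treatedSet n₁ n₀, ω i ∧
    0 < ∑ i ∈ (treatedSet n₁ n₀)ᶜ, ω i ∧
    (∑ i ∈ treatedSet n₁ n₀, ω i)⁻¹ • (∑ i ∈ treatedSet n₁ n₀, ω i • G i)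
      = (∑ i ∈ (treatedSet n₁ n₀)ᶜ, ω i)⁻¹ • (∑ i ∈ (treatedSet n₁ n₀)ᶜ, ω i • G i) ∧
    v = (∑ i ∈ treatedSet n₁ n₀, ω i * Y i) / (∑ i ∈ treatedSet n₁ n₀, ω i)
        - (∑ i ∈ (treatedSet n₁ n₀)ᶜ, ω i * Y i) / (∑ i ∈ (treatedSet n₁ n₀)ᶜ, ω i)}

/-- Attainable values of the Charnes–Cooper transformed linear program. -/
def lpVals (n₁ n₀ d : ℕ) (Y : Fin (n₁ + n₀) → ℝ) (G : Fin (n₁ + n₀) → Fin d → ℝ)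
    (l u : Fin (n₁ + n₀) → ℝ) : Set ℝ :=
  {v : ℝ | ∃ (ωb : Fin (n₁ + n₀) → ℝ) (t₁ t₀ : ℝ),
    (∀ i : Fin (n₁ + n₀), ((i : ℕ) < n₁ → l i * t₁ ≤ ωb i ∧ ωb i ≤ u i * t₁) ∧
      (n₁ ≤ (i : ℕ) → l i * t₀ ≤ ωb i ∧ ωb i ≤ u i * t₀)) ∧
    ∑ i ∈ treatedSet n₁ n₀, ωb i = 1 ∧
    ∑ i ∈ (treatedSet n₁ n₀)ᶜ, ωb i = 1 ∧
    (∑ i ∈ treatedSet n₁ n₀, ωb i • G i) = (∑ i ∈ (treatedSet n₁ n₀)ᶜ, ωb i • G i) ∧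
    0 ≤ t₁ ∧ 0 ≤ t₀ ∧
    v = ∑ i ∈ treatedSet n₁ n₀, ωb i * Y i - ∑ i ∈ (treatedSet n₁ n₀)ᶜ, ωb i * Y i}

lemma mem_treated {n₁ n₀ : ℕ} {i : Fin (n₁ + n₀)} :
    i ∈ treatedSet n₁ n₀ ↔ (i : ℕ) < n₁ := by
  simp [treatedSet]

lemma mem_treated_compl {n₁ n₀ : ℕ} {i : Fin (n₁ + n₀)} :
    i ∈ (treatedSet n₁ n₀)ᶜ ↔ n₁ ≤ (i : ℕ) := by
  simp [treatedSet, not_lt]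

lemma fracVals_eq_lpVals (n₁ n₀ d : ℕ) (Y : Fin (n₁ + n₀) → ℝ)
    (G : Fin (n₁ + n₀) → Fin d → ℝ) (l u : Fin (n₁ + n₀) → ℝ) :
    fracVals n₁ n₀ d Y G l u = lpVals n₁ n₀ d Y G l u := by
  ext v
  constructor
  · rintro ⟨ω, hbox, hS1, hS0, hbal, hv⟩
    set S₁ : ℝ := ∑ i ∈ treatedSet n₁ n₀, ω i with hS1d
    set S₀ : ℝ := ∑ i ∈ (treatedSet n₁ n₀)ᶜ, ω i with hS0d
    have hS1ne : S₁ ≠ 0 := ne_of_gt hS1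
    have hS0ne : S₀ ≠ 0 := ne_of_gt hS0
    refine ⟨fun i => if (i : ℕ) < n₁ then ω i / S₁ else ω i / S₀, S₁⁻¹, S₀⁻¹,
      ?_, ?_, ?_, ?_, inv_nonneg.mpr hS1.le, inv_nonneg.mpr hS0.le, ?_⟩
    · intro i
      constructor
      · intro hi
        simp only [if_pos hi]
        constructor
        · rw [le_div_iff₀ hS1, mul_assoc, inv_mul_cancel₀ hS1ne, mul_one]
          exact (hbox i).1
        · rw [div_le_iff₀ hS1, mul_assoc, inv_mul_cancel₀ hS1ne, mul_one]
          exact (hbox i).2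
      · intro hi
        simp only [if_neg (not_lt.mpr hi)]
        constructor
        · rw [le_div_iff₀ hS0, mul_assoc, inv_mul_cancel₀ hS0ne, mul_one]
          exact (hbox i).1
        · rw [div_le_iff₀ hS0, mul_assoc, inv_mul_cancel₀ hS0ne, mul_one]
          exact (hbox i).2
    · rw [Finset.sum_congr rfl (fun i hi => if_pos (mem_treated.mp hi)),
        ← Finset.sum_div, div_self hS1ne]
    · rw [Finset.sum_congr rfl (fun i hi => if_neg (not_lt.mpr (mem_treated_compl.mp hi))),
        ← Finset.sum_div, div_self hS0ne]
    · have e1 : ∑ i ∈ treatedSet n₁ n₀,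
          (if (i : ℕ) < n₁ then ω i / S₁ else ω i / S₀) • G i
          = S₁⁻¹ • ∑ i ∈ treatedSet n₁ n₀, ω i • G i := by
        rw [Finset.smul_sum]
        refine Finset.sum_congr rfl fun i hi => ?_
        rw [if_pos (mem_treated.mp hi), div_eq_mul_inv, mul_comm, mul_smul]
      have e0 : ∑ i ∈ (treatedSet n₁ n₀)ᶜ,
          (if (i : ℕ) < n₁ then ω i / S₁ else ω i / S₀) • G i
          = S₀⁻¹ • ∑ i ∈ (treatedSet n₁ n₀)ᶜ, ω i • G i := by
        rw [Finset.smul_sum]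
        refine Finset.sum_congr rfl fun i hi => ?_
        rw [if_neg (not_lt.mpr (mem_treated_compl.mp hi)), div_eq_mul_inv, mul_comm, mul_smul]
      rw [e1, e0]; exact hbal
    · have e1 : ∑ i ∈ treatedSet n₁ n₀,
          (if (i : ℕ) < n₁ then ω i / S₁ else ω i / S₀) * Y i
          = (∑ i ∈ treatedSet n₁ n₀, ω i * Y i) / S₁ := by
        rw [Finset.sum_div]
        refine Finset.sum_congr rfl fun i hi => ?_
        rw [if_pos (mem_treated.mp hi), div_mul_eq_mul_div]
      have e0 : ∑ i ∈ (treatedSet n₁ n₀)ᶜ,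
          (if (i : ℕ) < n₁ then ω i / S₁ else ω i / S₀) * Y i
          = (∑ i ∈ (treatedSet n₁ n₀)ᶜ, ω i * Y i) / S₀ := by
        rw [Finset.sum_div]
        refine Finset.sum_congr rfl fun i hi => ?_
        rw [if_neg (not_lt.mpr (mem_treated_compl.mp hi)), div_mul_eq_mul_div]
      rw [e1, e0]; exact hv
  · rintro ⟨ωb, t₁, t₀, hcon, hs1, hs0, hbal, ht1, ht0, hv⟩
    have ht1' : 0 < t₁ := by
      rcases lt_or_eq_of_le ht1 with h | h
      · exact h
      · exfalso
        have : ∑ i ∈ treatedSet n₁ n₀, ωb i = 0 := by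
          refine Finset.sum_eq_zero fun i hi => ?_
          have hi' := (hcon i).1 (mem_treated.mp hi)
          rw [← h] at hi'
          simpa using le_antisymm (by simpa using hi'.2) (by simpa using hi'.1)
        rw [this] at hs1; norm_num at hs1
    have ht0' : 0 < t₀ := by
      rcases lt_or_eq_of_le ht0 with h | h
      · exact h
      · exfalso
        have : ∑ i ∈ (treatedSet n₁ n₀)ᶜ, ωb i = 0 := by
          refine Finset.sum_eq_zero fun i hi => ?_
          have hi' := (hcon i).2 (mem_treated_compl.mp hi)
          rw [← h] at hi'
          simpa using le_antisymm (by simpa using hi'.2) (by simpa using hi'.1)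
        rw [this] at hs0; norm_num at hs0
    refine ⟨fun i => if (i : ℕ) < n₁ then ωb i / t₁ else ωb i / t₀, ?_, ?_, ?_, ?_, ?_⟩
    · intro i
      by_cases hi : (i : ℕ) < n₁
      · have h := (hcon i).1 hi
        simp only [if_pos hi]
        exact ⟨(le_div_iff₀ ht1').mpr h.1, (div_le_iff₀ ht1').mpr h.2⟩
      · have h := (hcon i).2 (not_lt.mp hi)
        simp only [if_neg hi]
        exact ⟨(le_div_iff₀ ht0').mpr h.1, (div_le_iff₀ ht0').mpr h.2⟩
    · rw [Finset.sum_congr rfl (fun i hi => if_pos (mem_treated.mp hi)),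
        ← Finset.sum_div, hs1]
      positivity
    · rw [Finset.sum_congr rfl (fun i hi => if_neg (not_lt.mpr (mem_treated_compl.mp hi))),
        ← Finset.sum_div, hs0]
      positivity
    · have e1s : ∑ i ∈ treatedSet n₁ n₀,
          (if (i : ℕ) < n₁ then ωb i / t₁ else ωb i / t₀) = 1 / t₁ := by
        rw [Finset.sum_congr rfl (fun i hi => if_pos (mem_treated.mp hi)),
          ← Finset.sum_div, hs1]
      have e0s : ∑ i ∈ (treatedSet n₁ n₀)ᶜ,
          (if (i : ℕ) < n₁ then ωb i / t₁ else ωb i / t₀) = 1 / t₀ := by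
        rw [Finset.sum_congr rfl (fun i hi => if_neg (not_lt.mpr (mem_treated_compl.mp hi))),
          ← Finset.sum_div, hs0]
      have e1 : ∑ i ∈ treatedSet n₁ n₀,
          (if (i : ℕ) < n₁ then ωb i / t₁ else ωb i / t₀) • G i
          = t₁⁻¹ • ∑ i ∈ treatedSet n₁ n₀, ωb i • G i := by
        rw [Finset.smul_sum]
        refine Finset.sum_congr rfl fun i hi => ?_
        rw [if_pos (mem_treated.mp hi), div_eq_mul_inv, mul_comm, mul_smul]
      have e0 : ∑ i ∈ (treatedSet n₁ n₀)ᶜ,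
          (if (i : ℕ) < n₁ then ωb i / t₁ else ωb i / t₀) • G i
          = t₀⁻¹ • ∑ i ∈ (treatedSet n₁ n₀)ᶜ, ωb i • G i := by
        rw [Finset.smul_sum]
        refine Finset.sum_congr rfl fun i hi => ?_
        rw [if_neg (not_lt.mpr (mem_treated_compl.mp hi)), div_eq_mul_inv, mul_comm, mul_smul]
      rw [e1s, e0s, e1, e0, one_div, inv_inv, one_div, inv_inv, smul_smul, smul_smul,
        mul_inv_cancel₀ (ne_of_gt ht1'), mul_inv_cancel₀ (ne_of_gt ht0'), one_smul, one_smul]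
      exact hbal
    · have e1s : ∑ i ∈ treatedSet n₁ n₀,
          (if (i : ℕ) < n₁ then ωb i / t₁ else ωb i / t₀) = 1 / t₁ := by
        rw [Finset.sum_congr rfl (fun i hi => if_pos (mem_treated.mp hi)),
          ← Finset.sum_div, hs1]
      have e0s : ∑ i ∈ (treatedSet n₁ n₀)ᶜ,
          (if (i : ℕ) < n₁ then ωb i / t₁ else ωb i / t₀) = 1 / t₀ := by
        rw [Finset.sum_congr rfl (fun i hi => if_neg (not_lt.mpr (mem_treated_compl.mp hi))),
          ← Finset.sum_div, hs0]
      have e1 : ∑ i ∈ treatedSet n₁ n₀,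
          (if (i : ℕ) < n₁ then ωb i / t₁ else ωb i / t₀) * Y i
          = (∑ i ∈ treatedSet n₁ n₀, ωb i * Y i) / t₁ := by
        rw [Finset.sum_div]
        refine Finset.sum_congr rfl fun i hi => ?_
        rw [if_pos (mem_treated.mp hi), div_mul_eq_mul_div]
      have e0 : ∑ i ∈ (treatedSet n₁ n₀)ᶜ,
          (if (i : ℕ) < n₁ then ωb i / t₁ else ωb i / t₀) * Y i
          = (∑ i ∈ (treatedSet n₁ n₀)ᶜ, ωb i * Y i) / t₀ := by
        rw [Finset.sum_div]
        refine Finset.sum_congr rfl fun i hi => ?_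
        rw [if_neg (not_lt.mpr (mem_treated_compl.mp hi)), div_mul_eq_mul_div]
      rw [e1s, e0s, e1, e0, hv]
      field_simp

/-- Charnes–Cooper-type transformation: the fractional program (difference of weighted
group means subject to box and balance constraints) has the same optimal value, for both
maximization and minimization, as the transformed linear program. -/
theorem stmt12 (n₁ n₀ d : ℕ) (Y : Fin (n₁ + n₀) → ℝ) (G : Fin (n₁ + n₀) → Fin d → ℝ)
    (l u : Fin (n₁ + n₀) → ℝ)
    (hl0 : ∀ i, 0 ≤ l i) (hlu : ∀ i, l i ≤ u i) (hu1 : ∀ i, u i ≤ 1)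
    (hpos1 : ∃ i : Fin (n₁ + n₀), (i : ℕ) < n₁ ∧ 0 < l i)
    (hpos0 : ∃ i : Fin (n₁ + n₀), n₁ ≤ (i : ℕ) ∧ 0 < l i) :
    sSup (fracVals n₁ n₀ d Y G l u) = sSup (lpVals n₁ n₀ d Y G l u) ∧
    sInf (fracVals n₁ n₀ d Y G l u) = sInf (lpVals n₁ n₀ d Y G l u) := by
  rw [fracVals_eq_lpVals]
  exact ⟨rfl, rfl⟩
end
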